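/- Let X be a complex Banach space. Every strong peak point of A_u(B_X) (or of A_b(B_X)) is a complex extreme point of B_X. Hence ρA(B_X) ⊆ ext_ℂ(B_X). -/

import Mathlib

open Metric Filter Topology Set

/-- The sup norm of a function over the closed unit ball. -/
noncomputable def supNorm {X Y : Type*} [NormedAddCommGroup X] [NormedAddCommGroup Y]
    (f : X → Y) : ℝ :=
  sSup ((fun x => ‖f x‖) '' Metric.closedBall (0 : X) 1)

/-- `f` strongly attains its (sup) norm at `x₀`: every maximizing sequence in the closed unit
ball has a subsequence converging to a unimodular multiple of `x₀`. -/
def StronglyAttains (𝕂 : Type*) [RCLike 𝕂] {X Y : Type*} [NormedAddCommGroup X]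
    [NormedSpace 𝕂 X] [NormedAddCommGroup Y] (f : X → Y) (x₀ : X) : Prop :=
  ∀ xs : ℕ → X, (∀ n, xs n ∈ Metric.closedBall (0 : X) 1) →
    Tendsto (fun n => ‖f (xs n)‖) atTop (nhds (supNorm f)) →
    ∃ (α : 𝕂) (φ : ℕ → ℕ), StrictMono φ ∧ ‖α‖ = 1 ∧
      Tendsto (fun n => xs (φ n)) atTop (nhds (α • x₀))

/-- The `k`-homogeneous polynomial associated to a continuous `k`-multilinear map. -/
noncomputable def polyEval {𝕂 : Type*} [RCLike 𝕂] {X Y : Type*} [NormedAddCommGroup X]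
    [NormedSpace 𝕂 X] [NormedAddCommGroup Y] [NormedSpace 𝕂 Y] {k : ℕ}
    (L : ContinuousMultilinearMap 𝕂 (fun _ : Fin k => X) Y) : X → Y :=
  fun x => L (fun _ => x)

/-- The set `ρ̃𝒫(ᵏX)` of points of the closed unit ball at which some nonzero bounded
`k`-homogeneous scalar polynomial strongly attains its norm. -/
def polyAttainPts (𝕂 : Type*) [RCLike 𝕂] (X : Type*) [NormedAddCommGroup X]
    [NormedSpace 𝕂 X] (k : ℕ) : Set X :=
  {x₀ | x₀ ∈ Metric.closedBall (0 : X) 1 ∧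
    ∃ L : ContinuousMultilinearMap 𝕂 (fun _ : Fin k => X) 𝕂,
      polyEval L ≠ 0 ∧ StronglyAttains 𝕂 (polyEval L) x₀}

/-- Numerical radius `v(f) = sup { |x*(f x)| : (x, x*) ∈ Π(X) }`. -/
noncomputable def numRadius (𝕂 : Type*) [RCLike 𝕂] {X : Type*} [NormedAddCommGroup X]
    [NormedSpace 𝕂 X] (f : X → X) : ℝ :=
  sSup {r | ∃ (x : X) (x' : X →L[𝕂] 𝕂), ‖x‖ = 1 ∧ ‖x'‖ = 1 ∧ x' x = 1 ∧ r = ‖x' (f x)‖}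

/-- The `k`-polynomial numerical index `n^(k)(X)`. -/
noncomputable def polyNumIndex (𝕂 : Type*) [RCLike 𝕂] (X : Type*) [NormedAddCommGroup X]
    [NormedSpace 𝕂 X] (k : ℕ) : ℝ :=
  sInf {r | ∃ L : ContinuousMultilinearMap 𝕂 (fun _ : Fin k => X) X,
    supNorm (polyEval L) = 1 ∧ r = numRadius 𝕂 (polyEval L)}

/-- The numerical index `n(X)` of a Banach space. -/
noncomputable def numIndex (𝕂 : Type*) [RCLike 𝕂] (X : Type*) [NormedAddCommGroup X]
    [NormedSpace 𝕂 X] : ℝ :=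
  sInf {r | ∃ T : X →L[𝕂] X, ‖T‖ = 1 ∧ r = numRadius 𝕂 (⇑T)}

/-- `x` is an extreme point of the convex set `s` : `y + z = 2x` with `y, z ∈ s` forces
`y = z = x`. -/
def IsExtremePt {E : Type*} [AddCommGroup E] (s : Set E) (x : E) : Prop :=
  x ∈ s ∧ ∀ y ∈ s, ∀ z ∈ s, y + z = x + x → y = x ∧ z = x

/-- `x` is a strongly exposed point of the closed unit ball. -/
def StronglyExposedPt (𝕂 : Type*) [RCLike 𝕂] {X : Type*} [NormedAddCommGroup X]
    [NormedSpace 𝕂 X] (x : X) : Prop :=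
  x ∈ Metric.closedBall (0 : X) 1 ∧ ∃ x' : X →L[𝕂] 𝕂, x' ≠ 0 ∧ ‖x'‖ ≤ 1 ∧
    (∀ y ∈ Metric.closedBall (0 : X) 1, RCLike.re (x' y) ≤ RCLike.re (x' x)) ∧
    ∀ xs : ℕ → X, (∀ n, xs n ∈ Metric.closedBall (0 : X) 1) →
      Tendsto (fun n => RCLike.re (x' (xs n))) atTop (nhds (RCLike.re (x' x))) →
      Tendsto xs atTop (nhds x)

/-- `x'` is a weak-* exposed point of the dual unit ball. -/
def WeakStarExposed (𝕂 : Type*) [RCLike 𝕂] {X : Type*} [NormedAddCommGroup X]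
    [NormedSpace 𝕂 X] (x' : X →L[𝕂] 𝕂) : Prop :=
  ‖x'‖ ≤ 1 ∧ ∃ x ∈ Metric.closedBall (0 : X) 1, x' x = 1 ∧
    ∀ y' : X →L[𝕂] 𝕂, ‖y'‖ ≤ 1 → y' x = 1 → y' = x'

/-- `f` is a strong peak function at `x₀`: `f` is nonzero on the ball and every maximizing
sequence in the closed unit ball converges to `x₀`. -/
def StrongPeakAt {X Y : Type*} [NormedAddCommGroup X] [NormedAddCommGroup Y]
    (f : X → Y) (x₀ : X) : Prop :=
  (∃ x ∈ Metric.closedBall (0 : X) 1, f x ≠ 0) ∧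
    ∀ xs : ℕ → X, (∀ n, xs n ∈ Metric.closedBall (0 : X) 1) →
      Tendsto (fun n => ‖f (xs n)‖) atTop (nhds (supNorm f)) →
      Tendsto xs atTop (nhds x₀)

/-- Complex extreme point of the closed unit ball. -/
def ComplexExtremePoint {X : Type*} [NormedAddCommGroup X] [NormedSpace ℂ X] (x : X) : Prop :=
  x ∈ Metric.closedBall (0 : X) 1 ∧
    ∀ y : X, (∀ θ : ℝ, ‖x + Complex.exp (θ * Complex.I) • y‖ ≤ 1) → y = 0

/-- Membership in `A_b(B_X : Y)`: bounded, continuous on the closed unit ball and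
holomorphic on the open unit ball. -/
def MemAb {X Y : Type*} [NormedAddCommGroup X] [NormedSpace ℂ X] [NormedAddCommGroup Y]
    [NormedSpace ℂ Y] (f : X → Y) : Prop :=
  ContinuousOn f (Metric.closedBall (0 : X) 1) ∧
    (∃ C, ∀ x ∈ Metric.closedBall (0 : X) 1, ‖f x‖ ≤ C) ∧
    DifferentiableOn ℂ f (Metric.ball (0 : X) 1)

/-- Membership in `A_u(B_X : Y)`: additionally uniformly continuous on the closed ball. -/
def MemAu {X Y : Type*} [NormedAddCommGroup X] [NormedSpace ℂ X] [NormedAddCommGroup Y]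
    [NormedSpace ℂ Y] (f : X → Y) : Prop :=
  MemAb f ∧ UniformContinuousOn f (Metric.closedBall (0 : X) 1)

/-- The set `ρA_u(B_X)` of strong peak points of `A_u(B_X)`. -/
def strongPeakPtsAu (X : Type*) [NormedAddCommGroup X] [NormedSpace ℂ X] : Set X :=
  {x₀ | ∃ f : X → ℂ, MemAu f ∧ StrongPeakAt f x₀}

/-- The holomorphic numerical index `n_u(X)`. -/
noncomputable def holNumIndex (X : Type*) [NormedAddCommGroup X] [NormedSpace ℂ X] : ℝ :=
  sInf {r | ∃ f : X → X, MemAu f ∧ supNorm f = 1 ∧ r = numRadius ℂ f}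

/-!
If the circle `x₀ + e^{iθ} y` lies in the closed unit ball, so does the disc `x₀ + λ y`,
`|λ| ≤ 1`, by convexity of the norm. For `r < 1` the function `λ ↦ f (r (x₀ + λ y))` is then
holomorphic near the closed unit disc, and the maximum modulus principle gives a unimodular `λ_r`
with `|f (r x₀)| ≤ |f (r (x₀ + λ_r y))|`. As `r → 1`, `|f (r x₀)| → |f x₀| = ‖f‖`, so the points
`r (x₀ + λ_r y)` form a maximizing sequence and tend to `x₀`. Along a subsequence `λ_r → λ` with
`|λ| = 1`, whence `x₀ + λ y = x₀` and `y = 0`.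
-/

theorem norm_add_smul_le_of_forall_exp {X : Type*} [NormedAddCommGroup X] [NormedSpace ℂ X]
    {x y : X} {M : ℝ} (hy : ∀ θ : ℝ, ‖x + Complex.exp (θ * Complex.I) • y‖ ≤ M) {c : ℂ}
    (hc : ‖c‖ ≤ 1) : ‖x + c • y‖ ≤ M := by
  have hconv : ConvexOn ℝ univ fun c : ℂ => ‖x + c • y‖ :=
    (convexOn_univ_norm.translate_right x).comp_linearMap
      (((LinearMap.id : ℂ →ₗ[ℂ] ℂ).smulRight y).restrictScalars ℝ)
  rw [← mem_closedBall_zero_iff, ← convexHull_sphere_eq_closedBall 0 zero_le_one] at hc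
  obtain ⟨u, hu, hcu⟩ := hconv.exists_ge_of_mem_convexHull (subset_univ _) hc
  rw [mem_sphere_zero_iff_norm] at hu
  have hexp : Complex.exp (u.arg * Complex.I) = u := by
    simpa [hu] using Complex.norm_mul_exp_arg_mul_I u
  exact hcu.trans (hexp ▸ hy u.arg)

theorem exists_norm_eq_one_norm_apply_smul_le {X : Type*} [NormedAddCommGroup X]
    [NormedSpace ℂ X] {f : X → ℂ} (hf : DifferentiableOn ℂ f (ball 0 1)) {x y : X}
    (hy : ∀ θ : ℝ, ‖x + Complex.exp (θ * Complex.I) • y‖ ≤ 1) {r : ℂ} (hr : ‖r‖ < 1) :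
    ∃ u : ℂ, ‖u‖ = 1 ∧ ‖f (r • x)‖ ≤ ‖f (r • (x + u • y))‖ := by
  set g : ℂ → ℂ := fun c => f (r • (x + c • y))
  have hmaps : MapsTo (fun c : ℂ => r • (x + c • y)) (closedBall 0 1) (ball 0 1) := by
    intro c hc
    rw [mem_closedBall_zero_iff] at hc
    rw [mem_ball_zero_iff, norm_smul]
    calc ‖r‖ * ‖x + c • y‖ ≤ ‖r‖ * 1 := by gcongr; exact norm_add_smul_le_of_forall_exp hy hc
      _ < 1 := by simpa using hr
  have hg : DiffContOnCl ℂ g (ball 0 1) := by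
    refine DifferentiableOn.diffContOnCl ?_
    rw [closure_ball 0 one_ne_zero]
    exact hf.comp (by fun_prop) hmaps
  obtain ⟨u, hu, hmax⟩ :=
    Complex.exists_mem_frontier_isMaxOn_norm isBounded_ball (nonempty_ball.2 one_pos) hg
  rw [frontier_ball 0 one_ne_zero, mem_sphere_zero_iff_norm] at hu
  refine ⟨u, hu, ?_⟩
  simpa [g] using hmax (subset_closure (mem_ball_self one_pos))

section supNorm

variable {X Y : Type*} [NormedAddCommGroup X] [NormedAddCommGroup Y] {f : X → Y}

theorem bddAbove_norm_image_closedBall (hf : ∃ C, ∀ x ∈ closedBall (0 : X) 1, ‖f x‖ ≤ C) :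
    BddAbove ((fun x => ‖f x‖) '' closedBall (0 : X) 1) := by
  obtain ⟨C, hC⟩ := hf
  exact ⟨C, by rintro _ ⟨x, hx, rfl⟩; exact hC x hx⟩

theorem norm_le_supNorm (hf : ∃ C, ∀ x ∈ closedBall (0 : X) 1, ‖f x‖ ≤ C) {x : X}
    (hx : x ∈ closedBall (0 : X) 1) : ‖f x‖ ≤ supNorm f :=
  le_csSup (bddAbove_norm_image_closedBall hf) ⟨x, hx, rfl⟩

theorem exists_seq_tendsto_supNorm (hf : ∃ C, ∀ x ∈ closedBall (0 : X) 1, ‖f x‖ ≤ C) :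
    ∃ xs : ℕ → X, (∀ n, xs n ∈ closedBall (0 : X) 1) ∧
      Tendsto (fun n => ‖f (xs n)‖) atTop (𝓝 (supNorm f)) := by
  obtain ⟨u, -, hu, hmem⟩ := exists_seq_tendsto_sSup
    ((nonempty_closedBall.2 zero_le_one).image _) (bddAbove_norm_image_closedBall hf)
  choose xs hxs hfxs using hmem
  exact ⟨xs, hxs, by simp only [hfxs]; exact hu⟩

end supNorm

namespace StrongPeakAt

variable {X Y : Type*} [NormedAddCommGroup X] [NormedAddCommGroup Y] {f : X → Y} {x₀ : X}

theorem mem_closedBall (hp : StrongPeakAt f x₀)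
    (hf : ∃ C, ∀ x ∈ closedBall (0 : X) 1, ‖f x‖ ≤ C) : x₀ ∈ closedBall (0 : X) 1 := by
  obtain ⟨xs, hxs, hlim⟩ := exists_seq_tendsto_supNorm hf
  exact isClosed_closedBall.mem_of_tendsto (hp.2 xs hxs hlim) (.of_forall hxs)

theorem norm_apply_eq_supNorm (hp : StrongPeakAt f x₀)
    (hf : ∃ C, ∀ x ∈ closedBall (0 : X) 1, ‖f x‖ ≤ C)
    (hcont : ContinuousWithinAt f (closedBall 0 1) x₀) : ‖f x₀‖ = supNorm f := by
  obtain ⟨xs, hxs, hlim⟩ := exists_seq_tendsto_supNorm hf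
  have hxs₀ := tendsto_nhdsWithin_iff.2 ⟨hp.2 xs hxs hlim, .of_forall hxs⟩
  exact tendsto_nhds_unique (hcont.tendsto.comp hxs₀).norm hlim

theorem tendsto_of_norm_le (hp : StrongPeakAt f x₀)
    (hf : ∃ C, ∀ x ∈ closedBall (0 : X) 1, ‖f x‖ ≤ C)
    (hcont : ContinuousWithinAt f (closedBall 0 1) x₀) {ws zs : ℕ → X}
    (hws : Tendsto ws atTop (𝓝[closedBall 0 1] x₀)) (hzs : ∀ n, zs n ∈ closedBall (0 : X) 1)
    (hle : ∀ n, ‖f (ws n)‖ ≤ ‖f (zs n)‖) : Tendsto zs atTop (𝓝 x₀) := by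
  refine hp.2 zs hzs (tendsto_of_tendsto_of_tendsto_of_le_of_le ?_ tendsto_const_nhds hle
    fun n => norm_le_supNorm hf (hzs n))
  rw [← hp.norm_apply_eq_supNorm hf hcont]
  exact (hcont.tendsto.comp hws).norm

end StrongPeakAt

theorem statement13_general {X : Type*} [NormedAddCommGroup X] [NormedSpace ℂ X]
    (f : X → ℂ) (hf : MemAb f ∨ MemAu f) (x₀ : X) (hp : StrongPeakAt f x₀) :
    ComplexExtremePoint x₀ := by
  obtain ⟨hcont, hbdd, hdiff⟩ : MemAb f := hf.elim id And.left
  have hx₀ := hp.mem_closedBall hbdd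
  refine ⟨hx₀, fun y hy => ?_⟩
  obtain ⟨r, -, hr, hr₁⟩ := exists_seq_strictMono_tendsto' (zero_lt_one' ℝ)
  have hr₁' : Tendsto (fun n => (r n : ℂ)) atTop (𝓝 1) :=
    (Complex.continuous_ofReal.tendsto 1).comp hr₁
  have hr_smul n {z : X} (hz : ‖z‖ ≤ 1) : (r n : ℂ) • z ∈ closedBall (0 : X) 1 := by
    rw [mem_closedBall_zero_iff, norm_smul, Complex.norm_real, Real.norm_of_nonneg (hr n).1.le]
    exact mul_le_one₀ (hr n).2.le (norm_nonneg z) hz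
  have hr_norm n : ‖(r n : ℂ)‖ < 1 := by simpa [abs_of_pos (hr n).1] using (hr n).2
  choose u hu hle using fun n => exists_norm_eq_one_norm_apply_smul_le hdiff hy (hr_norm n)
  have hws : Tendsto (fun n => (r n : ℂ) • x₀) atTop (𝓝[closedBall 0 1] x₀) :=
    tendsto_nhdsWithin_iff.2 ⟨by simpa using hr₁'.smul_const x₀,
      .of_forall fun n => hr_smul n (mem_closedBall_zero_iff.1 hx₀)⟩
  have hlim := hp.tendsto_of_norm_le hbdd (hcont x₀ hx₀) hws
    (fun n => hr_smul n (norm_add_smul_le_of_forall_exp hy (hu n).le)) hle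
  obtain ⟨v, hv, φ, hφ, huv⟩ := (isCompact_sphere (0 : ℂ) 1).tendsto_subseq
    (fun n => mem_sphere_zero_iff_norm.2 (hu n))
  have hlim' : Tendsto (fun n => (r (φ n) : ℂ) • (x₀ + u (φ n) • y)) atTop (𝓝 (x₀ + v • y)) := by
    simpa using (hr₁'.comp hφ.tendsto_atTop).smul (tendsto_const_nhds.add (huv.smul_const y))
  have hvy : x₀ + v • y = x₀ := tendsto_nhds_unique hlim' (hlim.comp hφ.tendsto_atTop)
  rw [add_eq_left, smul_eq_zero] at hvy
  exact hvy.resolve_left (ne_zero_of_mem_unit_sphere ⟨v, hv⟩)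

/-- every strong peak point of `A_u(B_X)` or `A_b(B_X)` is a complex extreme
point of the unit ball. -/
theorem statement13 {X : Type*} [NormedAddCommGroup X] [NormedSpace ℂ X] [CompleteSpace X]
    (f : X → ℂ) (hf : MemAb f ∨ MemAu f) (x₀ : X) (hp : StrongPeakAt f x₀) :
    ComplexExtremePoint x₀ :=
  statement13_general f hf x₀ hp
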